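/- arXiv:2602.02419 — 2 statements merged into one kernel-verified Lean document; each statement's English description precedes it below -/
import Mathlib

section
/- Let n ≥ 1 be a natural number, p ∈ [0,1], and let X be a random variable with the binomial distribution Bin(n,p). Fix δ ∈ (0,1). Define the Clopper–Pearson upper bound p_U(k) = sup{R ∈ [0,1] : F_{n,R}(k) ≥ δ/2} and the Clopper–Pearson lower bound p_L(k) = inf{R ∈ [0,1] : 1 − F_{n,R}(k−1) ≥ δ/2} (with p_L(0) = 0 and p_U(k) = 1 for k ≥ n). Then Pr(p_L(X) ≤ p ≤ p_U(X)) ≥ 1 − δ; that is, the Clopper–Pearson interval [p_L(X), p_U(X)] covers the true success probability p with probability at least 1 − δ. -/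
open scoped Classical BigOperators

/-- The probability mass function of the binomial distribution `Bin(n, p)` at `j`. -/
noncomputable def binomPMF (n : ℕ) (p : ℝ) (j : ℕ) : ℝ :=
  (n.choose j : ℝ) * p ^ j * (1 - p) ^ (n - j)

/-- The cumulative distribution function of `Bin(n, p)` at `k`:
`F_{n,p}(k) = Σ_{j=0}^{min(k,n)} C(n,j) p^j (1-p)^{n-j}`. -/
noncomputable def binomCDF (n : ℕ) (p : ℝ) (k : ℕ) : ℝ :=
  ∑ j ∈ Finset.range (min k n + 1), binomPMF n p j

/-- One-sided Clopper–Pearson upper confidence bound at count `k` and level `δ`: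
`sup {R ∈ [0,1] : F_{n,R}(k) ≥ δ}`. -/
noncomputable def cpUpper (n : ℕ) (δ : ℝ) (k : ℕ) : ℝ :=
  sSup {R : ℝ | R ∈ Set.Icc (0 : ℝ) 1 ∧ δ ≤ binomCDF n R k}

/-- One-sided Clopper–Pearson lower confidence bound at count `k` and level `δ`:
`inf {R ∈ [0,1] : 1 - F_{n,R}(k-1) ≥ δ}` for `k ≥ 1`, and `0` for `k = 0`. -/
noncomputable def cpLower (n : ℕ) (δ : ℝ) : ℕ → ℝ
  | 0 => 0
  | k + 1 => sInf {R : ℝ | R ∈ Set.Icc (0 : ℝ) 1 ∧ δ ≤ 1 - binomCDF n R k}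

/-!
The interval misses `p` only if `p < p_L(X)` or `p_U(X) < p`. Let `a` be the largest count with
`p_U(a) < p`; by definition of `p_U` this forces `F_{n,p}(a) < δ/2`, and every count with
`p_U(k) < p` is at most `a`, so this event has probability at most `F_{n,p}(a) < δ/2`.
Symmetrically, the smallest count `b = m + 1` with `p < p_L(b)` has upper tail
`1 - F_{n,p}(m) < δ/2`, which bounds the probability of the other event.
-/

open Finset

section Monoid

variable {M : Type*} [AddCommMonoid M] [PartialOrder M] [IsOrderedAddMonoid M]
  {f : ℕ → M} {s : Finset ℕ} {c : M}

theorem Finset.sum_le_of_forall_sum_range_succ_le (hf : ∀ k, 0 ≤ f k) (hc : 0 ≤ c)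
    (h : ∀ a ∈ s, ∑ k ∈ range (a + 1), f k ≤ c) : ∑ k ∈ s, f k ≤ c := by
  rcases s.eq_empty_or_nonempty with rfl | hs
  · simpa using hc
  calc ∑ k ∈ s, f k ≤ ∑ k ∈ range (s.max' hs + 1), f k :=
        sum_le_sum_of_subset_of_nonneg (fun k hk => mem_range_succ_iff.2 (s.le_max' k hk))
          fun k _ _ => hf k
    _ ≤ c := h _ (s.max'_mem hs)

theorem Finset.sum_le_of_forall_sum_Ico_le {N : ℕ} (hf : ∀ k, 0 ≤ f k) (hc : 0 ≤ c)
    (hs : s ⊆ range N) (h : ∀ b ∈ s, ∑ k ∈ Ico b N, f k ≤ c) : ∑ k ∈ s, f k ≤ c := by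
  rcases s.eq_empty_or_nonempty with rfl | hne
  · simpa using hc
  calc ∑ k ∈ s, f k ≤ ∑ k ∈ Ico (s.min' hne) N, f k :=
        sum_le_sum_of_subset_of_nonneg
          (fun k hk => mem_Ico.2 ⟨s.min'_le k hk, mem_range.1 (hs hk)⟩) fun k _ _ => hf k
    _ ≤ c := h _ (s.min'_mem hne)

end Monoid

variable {n : ℕ} {p δ : ℝ}

theorem binomPMF_nonneg (hp : p ∈ Set.Icc (0 : ℝ) 1) (j : ℕ) : 0 ≤ binomPMF n p j := by
  have := hp.1
  have : 0 ≤ 1 - p := sub_nonneg.2 hp.2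
  unfold binomPMF
  positivity

theorem sum_range_binomPMF (n : ℕ) (p : ℝ) : ∑ j ∈ range (n + 1), binomPMF n p j = 1 := by
  have h := add_pow p (1 - p) n
  rw [add_sub_cancel, one_pow] at h
  rw [h]
  exact sum_congr rfl fun j _ => by unfold binomPMF; ring

theorem binomCDF_of_le {k : ℕ} (hk : k ≤ n) :
    binomCDF n p k = ∑ j ∈ range (k + 1), binomPMF n p j := by
  rw [binomCDF, min_eq_left hk]

theorem one_sub_binomCDF_of_le {k : ℕ} (hk : k ≤ n) :
    1 - binomCDF n p k = ∑ j ∈ Ico (k + 1) (n + 1), binomPMF n p j := by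
  rw [← sum_range_binomPMF n p, binomCDF_of_le hk, sub_eq_iff_eq_add',
    sum_range_add_sum_Ico _ (by omega)]

theorem le_cpUpper (hp : p ∈ Set.Icc (0 : ℝ) 1) {k : ℕ} (h : δ ≤ binomCDF n p k) :
    p ≤ cpUpper n δ k :=
  le_csSup ⟨1, fun _ hx => hx.1.2⟩ ⟨hp, h⟩

theorem cpLower_succ_le (hp : p ∈ Set.Icc (0 : ℝ) 1) {k : ℕ} (h : δ ≤ 1 - binomCDF n p k) :
    cpLower n δ (k + 1) ≤ p :=
  csInf_le ⟨0, fun _ hx => hx.1.1⟩ ⟨hp, h⟩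

theorem sum_binomPMF_filter_cpUpper_lt_le (hp : p ∈ Set.Icc (0 : ℝ) 1) (hδ : 0 ≤ δ) :
    ∑ k ∈ (range (n + 1)).filter (fun k => cpUpper n δ k < p), binomPMF n p k ≤ δ := by
  refine sum_le_of_forall_sum_range_succ_le (binomPMF_nonneg hp) hδ fun a ha => ?_
  obtain ⟨han, hmiss⟩ := mem_filter.1 ha
  rw [← binomCDF_of_le (mem_range_succ_iff.1 han)]
  contrapose! hmiss
  exact le_cpUpper hp hmiss.le

theorem sum_binomPMF_filter_lt_cpLower_le (hp : p ∈ Set.Icc (0 : ℝ) 1) (hδ : 0 ≤ δ) :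
    ∑ k ∈ (range (n + 1)).filter (fun k => p < cpLower n δ k), binomPMF n p k ≤ δ := by
  refine sum_le_of_forall_sum_Ico_le (binomPMF_nonneg hp) hδ (filter_subset _ _) fun b hb => ?_
  obtain ⟨hbn, hmiss⟩ := mem_filter.1 hb
  cases b with
  | zero => exact absurd hmiss (not_lt.2 hp.1)
  | succ m =>
    rw [← one_sub_binomCDF_of_le (Nat.le_of_succ_le (mem_range_succ_iff.1 hbn))]
    contrapose! hmiss
    exact cpLower_succ_le hp hmiss.le

theorem clopperPearson_two_sided_coverage_general
    (n : ℕ) (p : ℝ) (hp : p ∈ Set.Icc (0 : ℝ) 1)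
    (δ : ℝ) (hδ : δ ∈ Set.Ioo (0 : ℝ) 1) :
    1 - δ ≤ ∑ j ∈ Finset.range (n + 1),
      (if cpLower n (δ / 2) j ≤ p ∧ p ≤ cpUpper n (δ / 2) j then binomPMF n p j else 0) := by
  set covers := fun j => cpLower n (δ / 2) j ≤ p ∧ p ≤ cpUpper n (δ / 2) j
  set low := (range (n + 1)).filter (fun k => p < cpLower n (δ / 2) k)
  set high := (range (n + 1)).filter (fun k => cpUpper n (δ / 2) k < p)
  have hδ2 : 0 ≤ δ / 2 := by linarith [hδ.1]
  have hmiss : ∑ j ∈ (range (n + 1)).filter (fun j => ¬covers j), binomPMF n p j ≤ δ :=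
    calc _ = ∑ j ∈ low ∪ high, binomPMF n p j := by
          simp only [covers, low, high, ← filter_or, not_and_or, not_le]
      _ ≤ ∑ j ∈ low ∪ high, binomPMF n p j + ∑ j ∈ low ∩ high, binomPMF n p j :=
          le_add_of_nonneg_right (sum_nonneg fun j _ => binomPMF_nonneg hp j)
      _ = ∑ j ∈ low, binomPMF n p j + ∑ j ∈ high, binomPMF n p j := sum_union_inter
      _ ≤ δ / 2 + δ / 2 := add_le_add (sum_binomPMF_filter_lt_cpLower_le hp hδ2)
          (sum_binomPMF_filter_cpUpper_lt_le hp hδ2)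
      _ = δ := add_halves δ
  have hsplit := sum_filter_add_sum_filter_not (range (n + 1)) covers (binomPMF n p)
  rw [sum_range_binomPMF] at hsplit
  rw [sum_ite, sum_const_zero, add_zero]
  linarith

/-- Clopper–Pearson two-sided coverage: the interval [p_L(X), p_U(X)] (with one-sided
bounds at level δ/2) covers the true success probability with probability at least 1 - δ. -/
theorem clopperPearson_two_sided_coverage
    (n : ℕ) (hn : 1 ≤ n) (p : ℝ) (hp : p ∈ Set.Icc (0 : ℝ) 1)
    (δ : ℝ) (hδ : δ ∈ Set.Ioo (0 : ℝ) 1) :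
    1 - δ ≤ ∑ j ∈ Finset.range (n + 1),
      (if cpLower n (δ / 2) j ≤ p ∧ p ≤ cpUpper n (δ / 2) j then binomPMF n p j else 0) :=
  clopperPearson_two_sided_coverage_general n p hp δ hδ
end

section
/- Let n ≥ 1 be a natural number and let k be a natural number with 0 ≤ k < n. Then the function p ↦ F_{n,p}(k) is strictly decreasing on the interval [0,1], with F_{n,0}(k) = 1 and F_{n,1}(k) = 0. -/
open scoped Classical BigOperators

/- The derivative of `p ↦ F_{n,p}(k)` telescopes, because the Bernstein basis polynomials
`b_{n,ν} = C(n,ν) X^ν (1-X)^(n-ν)` satisfy `b_{n,ν+1}' = n (b_{n-1,ν} - b_{n-1,ν+1})`: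
it equals `-n b_{n-1,k}(p)`, which is negative for `0 < p < 1` and `k ≤ n - 1`. -/

open Polynomial

theorem bernsteinPolynomial.derivative_sum_range (R : Type*) [CommRing R] (n m : ℕ) :
    derivative (∑ ν ∈ Finset.range (m + 1), bernsteinPolynomial R n ν) =
      -n * bernsteinPolynomial R (n - 1) m := by
  induction m with
  | zero => simp [bernsteinPolynomial.derivative_zero]
  | succ m ih =>
    rw [Finset.sum_range_succ, derivative_add, ih, bernsteinPolynomial.derivative_succ]
    ring

theorem binomPMF_eq_eval_bernsteinPolynomial (n : ℕ) (p : ℝ) (j : ℕ) :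
    binomPMF n p j = (bernsteinPolynomial ℝ n j).eval p := by
  simp [binomPMF, bernsteinPolynomial]

theorem binomCDF_eq_eval (n : ℕ) (p : ℝ) (k : ℕ) :
    binomCDF n p k =
      (∑ ν ∈ Finset.range (min k n + 1), bernsteinPolynomial ℝ n ν).eval p := by
  simp [binomCDF, binomPMF_eq_eval_bernsteinPolynomial, eval_finsetSum]

theorem hasDerivAt_binomCDF (n k : ℕ) (p : ℝ) :
    HasDerivAt (fun p => binomCDF n p k) (-(n * binomPMF (n - 1) p (min k n))) p := by
  have h :=
    Polynomial.hasDerivAt (∑ ν ∈ Finset.range (min k n + 1), bernsteinPolynomial ℝ n ν) p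
  simp only [← binomCDF_eq_eval] at h
  rwa [bernsteinPolynomial.derivative_sum_range, eval_mul, eval_neg, eval_natCast,
    ← binomPMF_eq_eval_bernsteinPolynomial, neg_mul] at h

theorem binomPMF_pos {n j : ℕ} {p : ℝ} (hj : j ≤ n) (hp : p ∈ Set.Ioo 0 1) :
    0 < binomPMF n p j := by
  have hp₀ : 0 < p := hp.1
  have hq₀ : 0 < 1 - p := sub_pos.mpr hp.2
  have hc : 0 < (n.choose j : ℝ) := Nat.cast_pos.mpr (Nat.choose_pos hj)
  unfold binomPMF
  positivity

theorem binomCDF_at_zero (n k : ℕ) : binomCDF n 0 k = 1 := by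
  simp [binomCDF_eq_eval, eval_finsetSum, bernsteinPolynomial.eval_at_0]

theorem binomCDF_at_one {n k : ℕ} (hk : k < n) : binomCDF n 1 k = 0 := by
  rw [binomCDF_eq_eval, eval_finsetSum]
  refine Finset.sum_eq_zero fun ν hν => ?_
  rw [bernsteinPolynomial.eval_at_1, if_neg]
  have := Finset.mem_range.mp hν
  omega

theorem binomCDF_strictAntiOn_general
    (n k : ℕ) (hk : k < n) :
    StrictAntiOn (fun p : ℝ => binomCDF n p k) (Set.Icc (0 : ℝ) 1) ∧
    binomCDF n 0 k = 1 ∧ binomCDF n 1 k = 0 := by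
  have hmin : min k n = k := min_eq_left hk.le
  refine ⟨?_, binomCDF_at_zero n k, binomCDF_at_one hk⟩
  refine strictAntiOn_of_deriv_neg (convex_Icc 0 1)
    (fun p _ => (hasDerivAt_binomCDF n k p).continuousAt.continuousWithinAt) fun p hp => ?_
  rw [interior_Icc] at hp
  rw [(hasDerivAt_binomCDF n k p).deriv, hmin, neg_neg_iff_pos]
  exact mul_pos (Nat.cast_pos.mpr (Nat.zero_lt_of_lt hk))
    (binomPMF_pos (Nat.le_sub_one_of_lt hk) hp)

/-- For 0 ≤ k < n, the map p ↦ F_{n,p}(k) is strictly decreasing on [0,1],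
with value 1 at p = 0 and value 0 at p = 1. -/
theorem binomCDF_strictAntiOn
    (n k : ℕ) (hn : 1 ≤ n) (hk : k < n) :
    StrictAntiOn (fun p : ℝ => binomCDF n p k) (Set.Icc (0 : ℝ) 1) ∧
    binomCDF n 0 k = 1 ∧ binomCDF n 1 k = 0 :=
  binomCDF_strictAntiOn_general n k hk
end
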